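/- arXiv:1009.0508 — 5 statements merged into one kernel-verified Lean document; each statement's English description precedes it below -/
import Mathlib

section
/- The conjugation operator J_n on the q-deformed space F_n^{(q)}, defined by reversing the order of tensor components (ξ_{i_1}⊗⋯⊗ξ_{i_n} ↦ ξ_{i_n}⊗⋯⊗ξ_{i_1}), is unitary, i.e. it preserves the q-deformed inner product: ⟨J_n x, J_n y⟩_q = ⟨x, y⟩_q for all x, y. -/
open Finset

/-- The number of inversions of a permutation of `Fin n`. -/
def invCount {n : ℕ} (σ : Equiv.Perm (Fin n)) : ℕ :=
  (Finset.univ.filter (fun p : Fin n × Fin n => p.1 < p.2 ∧ σ p.2 < σ p.1)).card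

/-- The `n`-fold tensor power `(ℂ^d)^{⊗ n}` modeled by its coefficients with respect to the
natural basis `{ξ_{i_1} ⊗ ⋯ ⊗ ξ_{i_n}}` indexed by tuples `Fin n → Fin d`. -/
abbrev Tens (d n : ℕ) := (Fin n → Fin d) → ℂ

/-- The q-deformed inner product on `(ℂ^d)^{⊗ n}`, determined by
`⟨ξ_{i_1}⊗⋯⊗ξ_{i_n}, ξ_{j_1}⊗⋯⊗ξ_{j_n}⟩_q = Σ_σ q^{inv(σ)} δ_{i_1, j_{σ(1)}} ⋯ δ_{i_n, j_{σ(n)}}`,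
extended sesquilinearly (conjugate-linear in the first variable). -/
noncomputable def qInner (q : ℝ) {d n : ℕ} (x y : Tens d n) : ℂ :=
  ∑ f : Fin n → Fin d, ∑ g : Fin n → Fin d,
    (starRingEnd ℂ) (x f) * y g *
      ∑ σ : Equiv.Perm (Fin n),
        (q : ℂ) ^ invCount σ * (if ∀ k, f k = g (σ k) then 1 else 0)

/-- The conjugation operator `J_n` reversing the order of tensor components:
`ξ_{i_1}⊗⋯⊗ξ_{i_n} ↦ ξ_{i_n}⊗⋯⊗ξ_{i_1}`, expressed on coefficients. -/
def reversal {d n : ℕ} (x : Tens d n) : Tens d n := fun f => x (f ∘ Fin.rev)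

/-!
Relabelling the tensor positions by a permutation `τ` moves the Gram entry `⟨ξ_f, ξ_g⟩_q` to
`⟨ξ_{f∘τ}, ξ_{g∘τ}⟩_q`, whose sum over `σ` is the original one reindexed by `σ ↦ τ⁻¹ σ τ`.
So the relabelling is an isometry whenever conjugation by `τ` preserves inversion counts. For the
reversal `w₀ : i ↦ n - 1 - i` this holds because `(i, j) ↦ (w₀ j, w₀ i)` maps the inversions of
`σ` bijectively onto those of `w₀ σ w₀`.
-/

lemma invCount_revPerm_conj {n : ℕ} (σ : Equiv.Perm (Fin n)) :
    invCount (Fin.revPerm⁻¹ * σ * Fin.revPerm) = invCount σ := by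
  unfold invCount
  refine Finset.card_bij' (fun p _ => (Fin.rev p.2, Fin.rev p.1))
    (fun p _ => (Fin.rev p.2, Fin.rev p.1)) ?_ ?_ ?_ ?_ <;>
  · intro p hp
    simp_all [Equiv.Perm.inv_def]

/-- The Gram entry `⟨ξ_f, ξ_g⟩_q` of two basis tensors. -/
noncomputable def qKernel (q : ℝ) {d n : ℕ} (f g : Fin n → Fin d) : ℂ :=
  ∑ σ : Equiv.Perm (Fin n), (q : ℂ) ^ invCount σ * (if ∀ k, f k = g (σ k) then 1 else 0)

section RelabelPositions

variable {n : ℕ} (τ : Equiv.Perm (Fin n))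
  (hτ : ∀ σ : Equiv.Perm (Fin n), invCount (τ⁻¹ * σ * τ) = invCount σ)
include hτ

lemma qKernel_comp_perm (q : ℝ) {d : ℕ} (f g : Fin n → Fin d) :
    qKernel q (f ∘ τ) (g ∘ τ) = qKernel q f g := by
  refine (Fintype.sum_equiv (MulAut.conj τ⁻¹).toEquiv _ _ fun σ => ?_).symm
  have hdelta : (∀ k, f k = g (σ k)) ↔ ∀ k, (f ∘ τ) k = (g ∘ τ) ((τ⁻¹ * σ * τ) k) := by
    simp only [Function.comp_apply, Equiv.Perm.mul_apply, Equiv.Perm.inv_def,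
      Equiv.apply_symm_apply]
    exact τ.surjective.forall
  simp only [MulEquiv.toEquiv_eq_coe, MulEquiv.coe_toEquiv, MulAut.conj_apply, inv_inv, hτ,
    hdelta]

lemma qInner_comp_perm (q : ℝ) {d : ℕ} (x y : Tens d n) :
    qInner q (fun f => x (f ∘ τ)) (fun f => y (f ∘ τ)) = qInner q x y := by
  let e : (Fin n → Fin d) ≃ (Fin n → Fin d) := Equiv.arrowCongr τ.symm (Equiv.refl (Fin d))
  refine Fintype.sum_equiv e _ _ fun f => Fintype.sum_equiv e _ _ fun g => ?_
  change _ * qKernel q f g = _ * qKernel q (f ∘ τ) (g ∘ τ)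
  rw [qKernel_comp_perm τ hτ]
  rfl

end RelabelPositions

theorem reversal_qInner_general (d : ℕ) (q : ℝ) (n : ℕ)
    (x y : Tens d n) : qInner q (reversal x) (reversal y) = qInner q x y :=
  qInner_comp_perm Fin.revPerm invCount_revPerm_conj q x y

/-- `J_n` is unitary on `F_n^{(q)}`: it preserves the q-deformed inner product. -/
theorem reversal_qInner (d : ℕ) (hd : 2 ≤ d) (q : ℝ) (hq : -1 < q ∧ q < 1) (n : ℕ)
    (x y : Tens d n) : qInner q (reversal x) (reversal y) = qInner q x y :=
  reversal_qInner_general d q n x y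
end

section
/- The set S of summable band-limited operators on H is a two-sided ideal of the *-algebra B of band-limited operators, and S is closed under taking adjoints. -/
open scoped ComplexOrder

variable {H : Type*} [NormedAddCommGroup H] [InnerProductSpace ℂ H] [CompleteSpace H]

/-- `T` is band-limited (with respect to the orthogonal decomposition `H = ⊕ₙ Hₙ` given by the
projections `P n`): there is a band limit `b` with `T(Hₙ) ⊆ ⊕_{|m-n| ≤ b} Hₘ` for all `n`. -/
def BandLimited (P : ℕ → H →L[ℂ] H) (T : H →L[ℂ] H) : Prop :=
  ∃ b : ℕ, ∀ m n : ℕ, (n + b < m ∨ m + b < n) → (P m).comp (T.comp (P n)) = 0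

/-- `T` is summable: `Σₙ ‖T|_{Hₙ}‖ < ∞`. -/
def SummableRestrictions (P : ℕ → H →L[ℂ] H) (T : H →L[ℂ] H) : Prop :=
  Summable fun n => ‖T.comp (P n)‖

/-- `T` is a summable band-limited operator. -/
def SBL (P : ℕ → H →L[ℂ] H) (T : H →L[ℂ] H) : Prop :=
  BandLimited P T ∧ SummableRestrictions P T

/-!
Closure of `B` under sums, scalars, adjoints and products is bookkeeping with band limits
(limits `b` and `c` give `b + c` for a product, using `1 = Σ Pₖ` in between). For summability,
a band limit `b` for `T` gives `Pₙ T = Σ_{|m-n| ≤ b} Pₙ T Pₘ` and `T Pₙ = Σ_{|m-n| ≤ b} Pₘ T Pₙ`.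
Since `‖Pₙ‖ ≤ 1`, this bounds `‖T* Pₙ‖ = ‖Pₙ T‖` by `Σ_{|m-n| ≤ b} ‖T Pₘ‖` and `‖S T Pₙ‖` by
`‖T‖ Σ_{|m-n| ≤ b} ‖S Pₘ‖`; a window of fixed width slid along a summable sequence is summable.
-/

theorem Summable.sum_Icc_sub_add {E : Type*} [NormedAddCommGroup E] {a : ℕ → E}
    (ha : Summable a) (b : ℕ) : Summable fun n => ∑ m ∈ Finset.Icc (n - b) (n + b), a m := by
  -- shifting by `b` gets rid of the truncated subtraction `n - b`
  refine (summable_nat_add_iff b).1 ?_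
  have hwindow : ∀ n, ∑ m ∈ Finset.Icc (n + b - b) (n + b + b), a m =
      ∑ k ∈ Finset.range (2 * b + 1), a (n + k) := by
    intro n
    rw [Nat.add_sub_cancel, ← Finset.Ico_add_one_right_eq_Icc, Finset.sum_Ico_eq_sum_range]
    congr 2
    omega
  simp only [hwindow]
  exact summable_sum fun k _ => (summable_nat_add_iff k).2 ha

section Expansion

variable {𝕜 E F : Type*} [NontriviallyNormedField 𝕜] [NormedAddCommGroup E] [NormedSpace 𝕜 E]
  [NormedAddCommGroup F] [NormedSpace 𝕜 F] {P : ℕ → E →L[𝕜] E}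

theorem ContinuousLinearMap.eq_sum_comp_proj
    (htotal : ∀ x, HasSum (fun n => P n x) x) {A : E →L[𝕜] F} {s : Finset ℕ}
    (h : ∀ m ∉ s, A.comp (P m) = 0) : A = ∑ m ∈ s, A.comp (P m) := by
  ext x
  refine ((htotal x).mapL A).unique ?_
  simpa using hasSum_sum_of_ne_finset_zero fun m hm => by simpa using congr($(h m hm) x)

theorem ContinuousLinearMap.eq_sum_proj_comp
    (htotal : ∀ x, HasSum (fun n => P n x) x) {A : F →L[𝕜] E} {s : Finset ℕ}
    (h : ∀ m ∉ s, (P m).comp A = 0) : A = ∑ m ∈ s, (P m).comp A := by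
  ext x
  refine (htotal (A x)).unique ?_
  simpa using hasSum_sum_of_ne_finset_zero fun m hm => by simpa using congr($(h m hm) x)

end Expansion

/-- `BandLimited P T` unfolds to `∃ b, HasBandLimit P b T`. -/
def HasBandLimit (P : ℕ → H →L[ℂ] H) (b : ℕ) (T : H →L[ℂ] H) : Prop :=
  ∀ m n : ℕ, (n + b < m ∨ m + b < n) → (P m).comp (T.comp (P n)) = 0

namespace HasBandLimit

variable {P : ℕ → H →L[ℂ] H} {b c : ℕ} {T S : H →L[ℂ] H}

section
omit [CompleteSpace H]

theorem add (hT : HasBandLimit P b T) (hS : HasBandLimit P c S) :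
    HasBandLimit P (max b c) (T + S) := fun m n hmn => by
  rw [ContinuousLinearMap.add_comp, ContinuousLinearMap.comp_add, hT m n (by omega),
    hS m n (by omega), add_zero]

theorem smul (hT : HasBandLimit P b T) (z : ℂ) : HasBandLimit P b (z • T) := fun m n hmn => by
  rw [ContinuousLinearMap.smul_comp, ContinuousLinearMap.comp_smul, hT m n hmn, smul_zero]

variable (htotal : ∀ x, HasSum (fun n => P n x) x)
include htotal

theorem comp_proj_eq_sum (hT : HasBandLimit P b T) (n : ℕ) :
    T.comp (P n) = ∑ m ∈ Finset.Icc (n - b) (n + b), (P m).comp (T.comp (P n)) :=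
  ContinuousLinearMap.eq_sum_proj_comp htotal fun m hm =>
    hT m n (by simp only [Finset.mem_Icc] at hm; omega)

theorem proj_comp_eq_sum (hT : HasBandLimit P b T) (n : ℕ) :
    (P n).comp T = ∑ m ∈ Finset.Icc (n - b) (n + b), (P n).comp (T.comp (P m)) :=
  ContinuousLinearMap.eq_sum_comp_proj htotal fun m hm => by
    rw [ContinuousLinearMap.comp_assoc]
    exact hT n m (by simp only [Finset.mem_Icc] at hm; omega)

theorem mul (hT : HasBandLimit P b T) (hS : HasBandLimit P c S) :
    HasBandLimit P (b + c) (T * S) := fun m n hmn => by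
  rw [ContinuousLinearMap.mul_def, ContinuousLinearMap.comp_assoc, hS.comp_proj_eq_sum htotal n,
    ContinuousLinearMap.comp_finsetSum, ContinuousLinearMap.comp_finsetSum]
  refine Finset.sum_eq_zero fun k hk => ?_
  simp only [Finset.mem_Icc] at hk
  rw [← ContinuousLinearMap.comp_assoc, ← ContinuousLinearMap.comp_assoc,
    ContinuousLinearMap.comp_assoc _ T, hT m k (by omega), ContinuousLinearMap.zero_comp]

end

theorem star (hsa : ∀ n, IsSelfAdjoint (P n)) (hT : HasBandLimit P b T) :
    HasBandLimit P b (star T) := fun m n hmn => by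
  have hadj : (P m).comp ((Star.star T).comp (P n)) =
      Star.star ((P n).comp (T.comp (P m))) := by
    simp only [← ContinuousLinearMap.mul_def, star_mul, (hsa m).star_eq, (hsa n).star_eq,
      mul_assoc]
  rw [hadj, hT n m hmn.symm, star_zero]

variable (hP : ∀ n, IsStarProjection (P n)) (htotal : ∀ x, HasSum (fun n => P n x) x)
include hP htotal

theorem norm_proj_comp_le (hT : HasBandLimit P b T) (n : ℕ) :
    ‖(P n).comp T‖ ≤ ∑ m ∈ Finset.Icc (n - b) (n + b), ‖T.comp (P m)‖ := by
  rw [hT.proj_comp_eq_sum htotal n]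
  refine (norm_sum_le _ _).trans (Finset.sum_le_sum fun m _ => ?_)
  calc ‖(P n).comp (T.comp (P m))‖ ≤ ‖P n‖ * ‖T.comp (P m)‖ := (P n).opNorm_comp_le _
    _ ≤ ‖T.comp (P m)‖ := mul_le_of_le_one_left (norm_nonneg _) ((hP n).norm_le)

theorem norm_mul_comp_proj_le (hT : HasBandLimit P b T) (S : H →L[ℂ] H) (n : ℕ) :
    ‖(S * T).comp (P n)‖ ≤ (∑ m ∈ Finset.Icc (n - b) (n + b), ‖S.comp (P m)‖) * ‖T‖ := by
  rw [ContinuousLinearMap.mul_def, ContinuousLinearMap.comp_assoc, hT.comp_proj_eq_sum htotal n,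
    ContinuousLinearMap.comp_finsetSum, Finset.sum_mul]
  refine (norm_sum_le _ _).trans (Finset.sum_le_sum fun m _ => ?_)
  calc ‖S.comp ((P m).comp (T.comp (P n)))‖ ≤ ‖S.comp (P m)‖ * ‖T.comp (P n)‖ :=
        (S.comp (P m)).opNorm_comp_le _
    _ ≤ ‖S.comp (P m)‖ * ‖T‖ := by
        gcongr
        exact (T.opNorm_comp_le _).trans (mul_le_of_le_one_right (norm_nonneg _) (hP n).norm_le)

end HasBandLimit

namespace SummableRestrictions

variable {P : ℕ → H →L[ℂ] H} {T S : H →L[ℂ] H}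

section
omit [CompleteSpace H]

theorem add (hT : SummableRestrictions P T) (hS : SummableRestrictions P S) :
    SummableRestrictions P (T + S) :=
  Summable.of_nonneg_of_le (fun _ => norm_nonneg _)
    (fun n => by rw [ContinuousLinearMap.add_comp]; exact norm_add_le _ _) (Summable.add hT hS)

theorem smul (hT : SummableRestrictions P T) (z : ℂ) : SummableRestrictions P (z • T) := by
  simpa only [SummableRestrictions, ContinuousLinearMap.smul_comp, norm_smul] using
    Summable.mul_left ‖z‖ hT

theorem mul_left (hS : SummableRestrictions P S) (T : H →L[ℂ] H) :
    SummableRestrictions P (T * S) :=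
  Summable.of_nonneg_of_le (fun _ => norm_nonneg _) (fun n => T.opNorm_comp_le (S.comp (P n)))
    (Summable.mul_left ‖T‖ hS)

end

variable (hP : ∀ n, IsStarProjection (P n)) (htotal : ∀ x, HasSum (fun n => P n x) x)
include hP htotal

theorem star (hb : BandLimited P T) (hT : SummableRestrictions P T) :
    SummableRestrictions P (star T) := by
  obtain ⟨b, hb⟩ := hb
  refine Summable.of_nonneg_of_le (fun _ => norm_nonneg _) (fun n => ?_)
    (Summable.sum_Icc_sub_add hT b)
  calc ‖(Star.star T).comp (P n)‖ = ‖Star.star ((P n).comp T)‖ := by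
        simp only [← ContinuousLinearMap.mul_def, star_mul, (hP n).isSelfAdjoint.star_eq]
    _ = ‖(P n).comp T‖ := norm_star _
    _ ≤ _ := HasBandLimit.norm_proj_comp_le hP htotal hb n

theorem mul_right (hS : SummableRestrictions P S) (hT : BandLimited P T) :
    SummableRestrictions P (S * T) := by
  obtain ⟨b, hb⟩ := hT
  exact Summable.of_nonneg_of_le (fun _ => norm_nonneg _)
    (HasBandLimit.norm_mul_comp_proj_le hP htotal hb S)
    ((Summable.sum_Icc_sub_add hS b).mul_right ‖T‖)

end SummableRestrictions

theorem sbl_star_closed_two_sided_ideal_general (P : ℕ → H →L[ℂ] H)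
    (hsa : ∀ n, IsSelfAdjoint (P n)) (hidem : ∀ n, P n * P n = P n)
    (htotal : ∀ x : H, HasSum (fun n => P n x) x) :
    (∀ T, SBL P T → SBL P (star T)) ∧
    (∀ T S, SBL P T → SBL P S → SBL P (T + S)) ∧
    (∀ (c : ℂ) T, SBL P T → SBL P (c • T)) ∧
    (∀ T S, BandLimited P T → SBL P S → SBL P (T * S) ∧ SBL P (S * T)) := by
  have hP : ∀ n, IsStarProjection (P n) := fun n => ⟨hidem n, hsa n⟩
  refine ⟨?_, ?_, ?_, ?_⟩
  · rintro T ⟨⟨b, hb⟩, hT⟩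
    exact ⟨⟨b, HasBandLimit.star hsa hb⟩, hT.star hP htotal ⟨b, hb⟩⟩
  · rintro T S ⟨⟨b, hb⟩, hT⟩ ⟨⟨c, hc⟩, hS⟩
    exact ⟨⟨max b c, HasBandLimit.add hb hc⟩, hT.add hS⟩
  · rintro z T ⟨⟨b, hb⟩, hT⟩
    exact ⟨⟨b, HasBandLimit.smul hb z⟩, hT.smul z⟩
  · rintro T S ⟨b, hb⟩ ⟨⟨c, hc⟩, hS⟩
    exact ⟨⟨⟨b + c, HasBandLimit.mul htotal hb hc⟩, hS.mul_left T⟩,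
      ⟨⟨c + b, HasBandLimit.mul htotal hc hb⟩, hS.mul_right hP htotal ⟨b, hb⟩⟩⟩

/-- The set `S` of summable band-limited operators is a two-sided ideal of the *-algebra `B`
of band-limited operators, closed under taking adjoints. -/
theorem sbl_star_closed_two_sided_ideal (P : ℕ → H →L[ℂ] H)
    (hsa : ∀ n, IsSelfAdjoint (P n)) (hidem : ∀ n, P n * P n = P n)
    (horth : ∀ m n, m ≠ n → P m * P n = 0)
    (htotal : ∀ x : H, HasSum (fun n => P n x) x) :
    (∀ T, SBL P T → SBL P (star T)) ∧
    (∀ T S, SBL P T → SBL P S → SBL P (T + S)) ∧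
    (∀ (c : ℂ) T, SBL P T → SBL P (c • T)) ∧
    (∀ T S, BandLimited P T → SBL P S → SBL P (T * S) ∧ SBL P (S * T)) :=
  sbl_star_closed_two_sided_ideal_general P hsa hidem htotal
end

section
/- Let T be a band-limited operator with band limit b. If T is summable and T* has band limit b as well, then T* is summable, with Σ_n ‖T*|_{H_n}‖ ≤ (2b+1) Σ_m ‖T|_{H_m}‖. -/
open scoped ComplexOrder

variable {H : Type*} [NormedAddCommGroup H] [InnerProductSpace ℂ H] [CompleteSpace H]

/-! Since `T*` has band limit `b`, `T* Pₙ = ∑_{|m-n| ≤ b} Pₘ T* Pₙ`, and each block satisfies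
`‖Pₘ T* Pₙ‖ = ‖Pₙ T Pₘ‖ ≤ ‖T Pₘ‖`. Summing over `n`, every `‖T Pₘ‖` is counted in at most
`2b + 1` windows. -/

open Finset

theorem summable_and_tsum_le_of_le_sum_Icc {f a : ℕ → ℝ} (hf : 0 ≤ f) (ha : 0 ≤ a)
    (hsum : Summable a) (b : ℕ) (hle : ∀ n, f n ≤ ∑ m ∈ Icc (n - b) (n + b), a m) :
    Summable f ∧ ∑' n, f n ≤ (2 * b + 1) * ∑' m, a m := by
  -- `g` is `a` shifted `b` places to the right, so each window becomes `g (n), …, g (n + 2b)`.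
  set g : ℕ → ℝ := Function.extend (· + b) a 0
  have hinj : Function.Injective (· + b) := add_left_injective b
  have hg0 : 0 ≤ g := Function.extend_nonneg ha le_rfl
  have hg : Summable g := (summable_extend_zero hinj).2 hsum
  have hshift : ∀ k, Summable fun n => g (n + k) := fun k => (summable_nat_add_iff k).2 hg
  have hwindow : ∀ n, f n ≤ ∑ k ∈ range (2 * b + 1), g (n + k) := fun n => calc
    f n ≤ ∑ m ∈ Icc (n - b) (n + b), a m := hle n
    _ = ∑ j ∈ Icc (n - b + b) (n + b + b), g j := by
      rw [← map_add_right_Icc, sum_map]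
      exact sum_congr rfl fun m _ => (hinj.extend_apply a 0 m).symm
    _ ≤ ∑ j ∈ Ico n (n + (2 * b + 1)), g j :=
      sum_le_sum_of_subset_of_nonneg (fun j hj => by simp only [mem_Icc, mem_Ico] at hj ⊢; omega)
        fun j _ _ => hg0 j
    _ = ∑ k ∈ range (2 * b + 1), g (n + k) := by rw [sum_Ico_eq_sum_range, add_tsub_cancel_left]
  have hG : Summable fun n => ∑ k ∈ range (2 * b + 1), g (n + k) :=
    summable_sum fun k _ => hshift k
  have hfs : Summable f := hG.of_nonneg_of_le hf hwindow
  refine ⟨hfs, ?_⟩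
  calc ∑' n, f n ≤ ∑' n, ∑ k ∈ range (2 * b + 1), g (n + k) := hfs.tsum_le_tsum hwindow hG
    _ = ∑ k ∈ range (2 * b + 1), ∑' n, g (n + k) := Summable.tsum_finsetSum fun k _ => hshift k
    _ ≤ ∑ _k ∈ range (2 * b + 1), ∑' j, g j :=
      sum_le_sum fun k _ => tsum_comp_le_tsum_of_inj hg hg0 (add_left_injective k)
    _ = (2 * b + 1) * ∑' m, a m := by
      rw [sum_const, card_range, nsmul_eq_mul, tsum_extend_zero hinj]
      push_cast
      ring

theorem norm_mul_star_mul_le {A : Type*} [NonUnitalNormedRing A] [StarRing A] [NormedStarGroup A]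
    {p q t : A} (hp : IsSelfAdjoint p) (hq : IsSelfAdjoint q) (hq1 : ‖q‖ ≤ 1) :
    ‖p * (star t * q)‖ ≤ ‖t * p‖ := calc
  ‖p * (star t * q)‖ = ‖star (q * (t * p))‖ := by
    rw [star_mul, star_mul, hp.star_eq, hq.star_eq, mul_assoc]
  _ = ‖q * (t * p)‖ := norm_star _
  _ ≤ ‖q‖ * ‖t * p‖ := norm_mul_le _ _
  _ ≤ ‖t * p‖ := mul_le_of_le_one_left (norm_nonneg _) hq1

theorem ContinuousLinearMap.eq_sum_comp_of_hasSum {𝕜 E F ι : Type*} [NontriviallyNormedField 𝕜]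
    [NormedAddCommGroup E] [NormedSpace 𝕜 E] [NormedAddCommGroup F] [NormedSpace 𝕜 F]
    {P : ι → F →L[𝕜] F} (hP : ∀ y, HasSum (fun i => P i y) y) (A : E →L[𝕜] F) {s : Finset ι}
    (hs : ∀ i ∉ s, (P i).comp A = 0) : A = ∑ i ∈ s, (P i).comp A := by
  ext x
  have hvanish : ∀ i ∉ s, P i (A x) = 0 := fun i hi => by
    simpa using congr($(hs i hi) x)
  simpa using ((hasSum_sum_of_ne_finset_zero hvanish).unique (hP (A x))).symm

theorem norm_star_comp_le_sum_Icc (P : ℕ → H →L[ℂ] H)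
    (hsa : ∀ n, IsSelfAdjoint (P n)) (hidem : ∀ n, P n * P n = P n)
    (htotal : ∀ x : H, HasSum (fun n => P n x) x) (T : H →L[ℂ] H) (b : ℕ)
    (hb' : ∀ m n : ℕ, (n + b < m ∨ m + b < n) → (P m).comp ((star T).comp (P n)) = 0) (n : ℕ) :
    ‖(star T).comp (P n)‖ ≤ ∑ m ∈ Icc (n - b) (n + b), ‖T.comp (P m)‖ := by
  have hPn : ‖P n‖ ≤ 1 := IsStarProjection.norm_le _ ⟨hidem n, hsa n⟩
  have hdecomp := ContinuousLinearMap.eq_sum_comp_of_hasSum htotal ((star T).comp (P n))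
    (s := Icc (n - b) (n + b)) fun m hm => hb' m n (by rw [mem_Icc] at hm; omega)
  calc ‖(star T).comp (P n)‖ = ‖∑ m ∈ Icc (n - b) (n + b), (P m).comp ((star T).comp (P n))‖ := by
        rw [← hdecomp]
    _ ≤ ∑ m ∈ Icc (n - b) (n + b), ‖(P m).comp ((star T).comp (P n))‖ := norm_sum_le _ _
    _ ≤ ∑ m ∈ Icc (n - b) (n + b), ‖T.comp (P m)‖ :=
        sum_le_sum fun m _ => norm_mul_star_mul_le (hsa m) (hsa n) hPn

theorem adjoint_summable_general (P : ℕ → H →L[ℂ] H)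
    (hsa : ∀ n, IsSelfAdjoint (P n)) (hidem : ∀ n, P n * P n = P n)
    (htotal : ∀ x : H, HasSum (fun n => P n x) x)
    (T : H →L[ℂ] H) (b : ℕ)
    (hb' : ∀ m n : ℕ, (n + b < m ∨ m + b < n) → (P m).comp ((star T).comp (P n)) = 0)
    (hsum : Summable fun n => ‖T.comp (P n)‖) :
    (Summable fun n => ‖(star T).comp (P n)‖) ∧
    ∑' n, ‖(star T).comp (P n)‖ ≤ (2 * b + 1) * ∑' m, ‖T.comp (P m)‖ :=
  summable_and_tsum_le_of_le_sum_Icc (fun _ => norm_nonneg _) (fun _ => norm_nonneg _) hsum b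
    (norm_star_comp_le_sum_Icc P hsa hidem htotal T b hb')

/-- If `T` is a summable band-limited operator with band limit `b`, and `T*` also has band
limit `b`, then `T*` is summable, with `Σₙ ‖T*|_{Hₙ}‖ ≤ (2b+1) Σₘ ‖T|_{Hₘ}‖`. -/
theorem adjoint_summable (P : ℕ → H →L[ℂ] H)
    (hsa : ∀ n, IsSelfAdjoint (P n)) (hidem : ∀ n, P n * P n = P n)
    (horth : ∀ m n, m ≠ n → P m * P n = 0)
    (htotal : ∀ x : H, HasSum (fun n => P n x) x)
    (T : H →L[ℂ] H) (b : ℕ)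
    (hb : ∀ m n : ℕ, (n + b < m ∨ m + b < n) → (P m).comp (T.comp (P n)) = 0)
    (hb' : ∀ m n : ℕ, (n + b < m ∨ m + b < n) → (P m).comp ((star T).comp (P n)) = 0)
    (hsum : Summable fun n => ‖T.comp (P n)‖) :
    (Summable fun n => ‖(star T).comp (P n)‖) ∧
    ∑' n, ‖(star T).comp (P n)‖ ≤ (2 * b + 1) * ∑' m, ‖T.comp (P m)‖ :=
  adjoint_summable_general P hsa hidem htotal T b hb' hsum
end

section
/- On the q-deformed Fock space F^{(q)}, the commutator of the left annihilation operator (L_i^{(q)})* and the right creation operator R_j^{(q)} restricted to the n-particle space F_n^{(q)} equals δ_{ij} q^n times the identity of F_n^{(q)}, for all n ≥ 1. -/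
open Finset

/-- The right creation operator `R_j^{(q)}` (appending `ξ_j`), on coefficients. -/
def rcre {d n : ℕ} (j : Fin d) (x : Tens d n) : Tens d (n + 1) :=
  fun f => if f (Fin.last n) = j then x (Fin.init f) else 0

/-- The left annihilation operator `(L_j^{(q)})*`, acting by
`(L_j^{(q)})*(ξ_{i_1}⊗⋯⊗ξ_{i_{n+1}}) = Σ_m q^{m-1} δ_{j,i_m} ξ_{i_1}⊗⋯⊗(ξ_{i_m} deleted)⊗⋯`,
expressed on coefficients. -/
noncomputable def lann {d n : ℕ} (q : ℂ) (j : Fin d) (x : Tens d (n + 1)) : Tens d n :=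
  fun g => ∑ m : Fin (n + 1), q ^ (m : ℕ) * x (m.insertNth j g)

/-!
Deleting the letter `ξ_i` from a word `w ξ_k` either deletes the appended last letter, which
happens with weight `q^n` and only if `k = i`, or deletes a letter of `w` and leaves the last
letter in place; the latter terms make up `R_j (L_i)^* x`, so only the first survives in the
commutator.
-/

namespace Fin

variable {α : Type*} {n : ℕ}

theorem insertNth_castSucc_apply_last (k : Fin (n + 1)) (a : α) (f : Fin (n + 1) → α) :
    insertNth (α := fun _ => α) k.castSucc a f (last (n + 1)) = f (last n) := by
  rw [← succ_last, ← succAbove_castSucc_of_le _ _ (le_last k), insertNth_apply_succAbove]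

theorem init_insertNth_castSucc (k : Fin (n + 1)) (a : α) (f : Fin (n + 1) → α) :
    init (insertNth (α := fun _ => α) k.castSucc a f) =
      insertNth (α := fun _ => α) k a (init f) := by
  funext l
  induction l using succAboveCases k with
  | x => simp only [init, insertNth_apply_same]
  | p l => simp only [init, insertNth_apply_succAbove, ← castSucc_succAbove_castSucc]

end Fin

theorem lann_rcre {d m : ℕ} (q : ℂ) (i j : Fin d) (x : Tens d (m + 1)) :
    lann q i (rcre j x) = rcre j (lann q i x) + (if i = j then q ^ (m + 1) else 0) • x := by
  funext f
  simp only [lann, rcre, Pi.add_apply, Pi.smul_apply, smul_eq_mul, Fin.sum_univ_castSucc,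
    Fin.insertNth_castSucc_apply_last, Fin.init_insertNth_castSucc, Fin.val_castSucc,
    Fin.val_last, Fin.insertNth_last', Fin.snoc_last, Fin.init_snoc]
  split_ifs <;> simp

theorem lann_rcre_commutator_general (d : ℕ) (q : ℂ) (i j : Fin d) (m : ℕ)
    (x : Tens d (m + 1)) :
    lann q i (rcre j x) - rcre j (lann q i x) =
      (if i = j then q ^ (m + 1) else 0) • x := by
  rw [lann_rcre, add_sub_cancel_left]

/-- On the q-deformed Fock space, `[(L_i^{(q)})*, R_j^{(q)}]` restricted to `F_n^{(q)}`
equals `δ_{ij} q^n` times the identity of `F_n^{(q)}`, for all `n ≥ 1` (here `n = m + 1`). -/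
theorem lann_rcre_commutator (d : ℕ) (hd : 2 ≤ d) (q : ℂ) (i j : Fin d) (m : ℕ)
    (x : Tens d (m + 1)) :
    lann q i (rcre j x) - rcre j (lann q i x) =
      (if i = j then q ^ (m + 1) else 0) • x :=
  lann_rcre_commutator_general d q i j m x
end

section
/- For n ≥ 1, the operator A_j on (ℂ^d)^{⊗n} defined by A_j(ξ_{i_1}⊗⋯⊗ξ_{i_n}) = δ_{j,i_1} ξ_{i_2}⊗⋯⊗ξ_{i_n} satisfies A_j M_n^{(q)} = (L_j^{(q)})*|_{F_n^{(q)}}, i.e. A_j = (L_j^{(q)})*(M_n^{(q)})^{-1} whenever M_n^{(q)} is invertible. -/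
open Finset

/-- The operator `A_j : (ℂ^d)^{⊗(n+1)} → (ℂ^d)^{⊗n}` defined on the natural basis by
`A_j(ξ_{i_1}⊗⋯⊗ξ_{i_{n+1}}) = δ_{j,i_1} ξ_{i_2}⊗⋯⊗ξ_{i_{n+1}}`, on coefficients. -/
def aop {d n : ℕ} (j : Fin d) (x : Tens d (n + 1)) : Tens d n :=
  fun g => x (Fin.cons j g)

/-- The left creation operator `L_j^{(q)}` (prepending `ξ_j`), on coefficients. -/
def lcre {d n : ℕ} (j : Fin d) (x : Tens d n) : Tens d (n + 1) :=
  fun f => if f 0 = j then x (Fin.tail f) else 0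

/-!
Writing `M_n^{(q)} = Σ_i L_i^{(q)} (L_i^{(q)})*`, it suffices that `A_j` is linear and a left
inverse of `L_j^{(q)}` killing the range of every other `L_i^{(q)}`: `A_j L_i^{(q)} = δ_{ij}`.
-/

section

variable {d n : ℕ}

theorem aop_sum {ι : Type*} (s : Finset ι) (j : Fin d) (x : ι → Tens d (n + 1)) :
    aop j (∑ i ∈ s, x i) = ∑ i ∈ s, aop j (x i) := by
  funext g
  simp only [aop, Finset.sum_apply]

theorem aop_lcre (i j : Fin d) (y : Tens d n) :
    aop j (lcre i y) = if i = j then y else 0 := by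
  funext g
  by_cases h : i = j
  · simp [aop, lcre, h]
  · simp [aop, lcre, h, Ne.symm h]

end

theorem aop_comp_Mq_general (d : ℕ) (q : ℂ) (j : Fin d) (m : ℕ) (x : Tens d (m + 1)) :
    aop j (∑ i : Fin d, lcre i (lann q i x)) = lann q j x := by
  simp only [aop_sum, aop_lcre, Finset.sum_ite_eq', Finset.mem_univ, if_true]

/-- With `M_n^{(q)} = Σ_i L_i^{(q)} (L_i^{(q)})*` on `F_n^{(q)}` (`n = m+1 ≥ 1`), the operator
`A_j` satisfies `A_j M_n^{(q)} = (L_j^{(q)})*|_{F_n^{(q)}}`, i.e. `A_j = (L_j^{(q)})* (M_n^{(q)})⁻¹`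
whenever `M_n^{(q)}` is invertible. -/
theorem aop_comp_Mq (d : ℕ) (hd : 2 ≤ d) (q : ℂ) (j : Fin d) (m : ℕ) (x : Tens d (m + 1)) :
    aop j (∑ i : Fin d, lcre i (lann q i x)) = lann q j x :=
  aop_comp_Mq_general d q j m x
end
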